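/- Let p be a polynomial over ℝ in the variables x_1,…,x_m written as p = ∑_j c_j(y) · x^{β_j}, where the monomials x^{β_j} are distinct and the coefficients c_j(y) are polynomials in other variables y. If, for random (X, Y) with all coordinates independent and atomless, p(X, Y) = 0 with positive probability, then every c_j(Y) = 0 with positive probability. -/

import Mathlib

/-!
Condition on `Y`. If `c_j(Y) ≠ 0` almost surely, then for almost every value `y` of `Y` the
polynomial `x ↦ ∑ᵢ cᵢ(y) x^{βᵢ}` is nonzero, since its coefficient at `x^{β_j}` is `c_j(y)`. The
zero set of a nonzero polynomial is null for any product of atomless measures: by induction on the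
number of variables, the leading coefficient in the first variable is a.e. nonzero, and then each
slice is a nonzero polynomial in one variable, with finitely many roots. As the law of `(X, Y)` is
the product of the laws of the coordinates, Fubini gives `p(X, Y) ≠ 0` almost surely.
-/

open MeasureTheory ProbabilityTheory

theorem Polynomial.ae_eval_ne_zero {R : Type*} [CommRing R] [IsDomain R] [MeasurableSpace R]
    (ν : Measure R) [NullSingletonClass ν] {p : Polynomial R} (hp : p ≠ 0) :
    ∀ᵐ a ∂ν, p.eval a ≠ 0 :=
  measure_eq_zero_iff_ae_notMem.mp ((Polynomial.finite_setOfPred_isRoot hp).measure_zero ν)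

namespace MvPolynomial

theorem ae_eval_ne_zero {n : ℕ} (ν : Fin n → Measure ℝ) [∀ i, SigmaFinite (ν i)]
    [∀ i, NullSingletonClass (ν i)] {q : MvPolynomial (Fin n) ℝ} (hq : q ≠ 0) :
    ∀ᵐ x ∂Measure.pi ν, eval x q ≠ 0 := by
  induction n with
  | zero =>
    obtain ⟨a, rfl⟩ := C_surjective (Fin 0) q
    exact ae_of_all _ fun x => by simpa using hq
  | succ n ih =>
    set Q := finSuccEquiv ℝ n q
    have hQ : Q ≠ 0 := (map_ne_zero_iff _ (finSuccEquiv ℝ n).injective).mpr hq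
    have hlc : ∀ᵐ t ∂Measure.pi (fun j => ν (Fin.succ j)), eval t Q.leadingCoeff ≠ 0 :=
      ih _ (Polynomial.leadingCoeff_ne_zero.mpr hQ)
    have hne : MeasurableSet {x : Fin (n + 1) → ℝ | eval x q ≠ 0} :=
      (continuous_eval q).measurable (measurableSet_singleton 0).compl
    set φ := MeasurableEquiv.piFinSuccAbove (fun _ : Fin (n + 1) => ℝ) 0
    have hφ (z : ℝ × (Fin n → ℝ)) : φ.symm z = Fin.cons z.1 z.2 := by
      simp only [φ, MeasurableEquiv.piFinSuccAbove_symm_apply, Fin.insertNthEquiv_zero]; rfl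
    have hcons : MeasurableSet {z : ℝ × (Fin n → ℝ) | eval (Fin.cons z.1 z.2) q ≠ 0} := by
      simpa only [Set.preimage_ofPred_eq, hφ] using hne.preimage φ.symm.measurable
    suffices h : ∀ᵐ t ∂Measure.pi (fun j => ν (Fin.succ j)), ∀ᵐ a ∂ν 0,
        eval (Fin.cons a t : Fin (n + 1) → ℝ) q ≠ 0 by
      rw [← (measurePreserving_piFinSuccAbove ν 0).symm.map_eq,
        ae_map_iff φ.symm.measurable.aemeasurable hne]
      simp only [hφ]
      exact (Measure.ae_prod_iff_ae_ae hcons).2 ((Measure.ae_ae_comm hcons).2 h)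
    filter_upwards [hlc] with t ht
    simp only [eval_eq_eval_mv_eval']
    refine Polynomial.ae_eval_ne_zero _ fun h => ht ?_
    rw [Polynomial.leadingCoeff, ← Polynomial.coeff_map, h, Polynomial.coeff_zero]

theorem coeff_sum_monomial_of_injective {σ R ι : Type*} [CommSemiring R] [Fintype ι]
    {e : ι → σ →₀ ℕ} (he : Function.Injective e) (c : ι → R) (j : ι) :
    coeff (e j) (∑ i, monomial (e i) (c i)) = c j := by
  classical
  simp [coeff_sum, coeff_monomial, he.eq_iff]

end MvPolynomial

theorem ProbabilityTheory.iIndepFun.map_prodMk_eq_prod_pi {Ω ι κ β : Type*} [MeasurableSpace Ω]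
    {μ : Measure Ω} [Fintype ι] [Fintype κ] [MeasurableSpace β] {f : ι → Ω → β} {g : κ → Ω → β}
    (hf : ∀ i, Measurable (f i)) (hg : ∀ k, Measurable (g k)) (h : iIndepFun (Sum.elim f g) μ) :
    μ.map (fun ω => (fun i => f i ω, fun k => g k ω)) =
      (Measure.pi fun i => μ.map (f i)).prod (Measure.pi fun k => μ.map (g k)) := by
  have := h.isProbabilityMeasure
  have hfg : ∀ i, Measurable (Sum.elim f g i) := Sum.forall.2 ⟨hf, hg⟩
  have : ∀ i, IsProbabilityMeasure (μ.map (Sum.elim f g i)) :=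
    fun i => Measure.isProbabilityMeasure_map (hfg i).aemeasurable
  have hpi := (measurePreserving_sumPiEquivProdPi fun i => μ.map (Sum.elim f g i)).map_eq
  rw [← h.map_fun_eq_pi_map fun i => (hfg i).aemeasurable,
    Measure.map_map (MeasurableEquiv.measurable _) (measurable_pi_lambda _ hfg)] at hpi
  exact hpi

theorem ae_sum_mul_prod_pow_ne_zero {α : Type*} [MeasurableSpace α] {κ : Measure α} [SFinite κ]
    {m : ℕ} (ν : Fin m → Measure ℝ) [∀ i, SigmaFinite (ν i)] [∀ i, NullSingletonClass (ν i)]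
    {ι : Type*} [Fintype ι] {β : ι → Fin m → ℕ} (hβ : Function.Injective β)
    {a : ι → α → ℝ} (ha : ∀ i, Measurable (a i)) {j : ι} (hj : ∀ᵐ t ∂κ, a j t ≠ 0) :
    ∀ᵐ z ∂(Measure.pi ν).prod κ, ∑ i, a i z.2 * ∏ k, z.1 k ^ β i k ≠ 0 := by
  have hmeas : MeasurableSet {z : (Fin m → ℝ) × α | ∑ i, a i z.2 * ∏ k, z.1 k ^ β i k ≠ 0} :=
    (by fun_prop : Measurable fun z : (Fin m → ℝ) × α => ∑ i, a i z.2 * ∏ k, z.1 k ^ β i k)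
      (measurableSet_singleton 0).compl
  refine (Measure.ae_prod_iff_ae_ae hmeas).2 ((Measure.ae_ae_comm hmeas).2 ?_)
  filter_upwards [hj] with t ht
  have he : Function.Injective fun i => Finsupp.equivFunOnFinite.symm (β i) :=
    Finsupp.equivFunOnFinite.symm.injective.comp hβ
  have hq : ∑ i, MvPolynomial.monomial (Finsupp.equivFunOnFinite.symm (β i)) (a i t) ≠ 0 :=
    fun h0 => ht <| by
      simpa [h0] using (MvPolynomial.coeff_sum_monomial_of_injective he (a · t) j).symm
  simpa [MvPolynomial.eval_monomial, Finsupp.prod_fintype] using MvPolynomial.ae_eval_ne_zero ν hq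

theorem coefficients_vanish_of_polynomial_vanishes_general
    {Ω : Type*} [MeasurableSpace Ω] (μ : Measure Ω) [IsProbabilityMeasure μ]
    (m l N : ℕ)
    (β : Fin N → (Fin m → ℕ)) (hβ : Function.Injective β)
    (c : Fin N → MvPolynomial (Fin l) ℝ)
    (X : Fin m → Ω → ℝ) (Y : Fin l → Ω → ℝ)
    (hmeasX : ∀ i, Measurable (X i)) (hmeasY : ∀ i, Measurable (Y i))
    (hindep : iIndepFun (Sum.elim X Y) μ)
    (hatomX : ∀ i, NoAtoms (μ.map (X i)))
    (hpos : 0 < μ {ω | ∑ j, MvPolynomial.eval (fun i => Y i ω) (c j) *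
      ∏ i, (X i ω) ^ (β j i) = 0}) :
    ∀ j, 0 < μ {ω | MvPolynomial.eval (fun i => Y i ω) (c j) = 0} := by
  intro j
  by_contra! hj
  have (i : Fin m) : IsProbabilityMeasure (μ.map (X i)) :=
    Measure.isProbabilityMeasure_map (hmeasX i).aemeasurable
  have (i : Fin m) : NullSingletonClass (μ.map (X i)) := hatomX i
  have (k : Fin l) : IsProbabilityMeasure (μ.map (Y k)) :=
    Measure.isProbabilityMeasure_map (hmeasY k).aemeasurable
  have hc (i : Fin N) : Measurable fun y : Fin l → ℝ => MvPolynomial.eval y (c i) :=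
    (MvPolynomial.continuous_eval _).measurable
  have hlawY : μ.map (fun ω k => Y k ω) = Measure.pi fun k => μ.map (Y k) :=
    (hindep.precomp Sum.inr_injective).map_fun_eq_pi_map fun k => (hmeasY k).aemeasurable
  have hcj : ∀ᵐ y ∂Measure.pi (fun k => μ.map (Y k)), MvPolynomial.eval y (c j) ≠ 0 := by
    rw [← hlawY]
    exact (ae_map_iff (measurable_pi_lambda _ hmeasY).aemeasurable
      (hc j (measurableSet_singleton 0)).compl).2
      (measure_eq_zero_iff_ae_notMem.mp (nonpos_iff_eq_zero.mp hj))
  have hp := ae_sum_mul_prod_pow_ne_zero (fun i => μ.map (X i)) hβ hc hcj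
  rw [← hindep.map_prodMk_eq_prod_pi hmeasX hmeasY] at hp
  have hXY : Measurable fun ω => (fun i => X i ω, fun k => Y k ω) :=
    (measurable_pi_lambda _ hmeasX).prodMk (measurable_pi_lambda _ hmeasY)
  exact hpos.ne' (measure_eq_zero_iff_ae_notMem.mpr (ae_of_ae_map hXY.aemeasurable hp))

/-- Inductive step of the cofactor-expansion argument: write
p = ∑ⱼ cⱼ(y)·x^{βⱼ} with pairwise distinct monomials x^{βⱼ}. If p(X,Y) = 0
with positive probability (all coordinates of (X,Y) independent with
atomless laws), then every coefficient cⱼ(Y) vanishes with positive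
probability. -/
theorem coefficients_vanish_of_polynomial_vanishes
    {Ω : Type*} [MeasurableSpace Ω] (μ : Measure Ω) [IsProbabilityMeasure μ]
    (m l N : ℕ)
    (β : Fin N → (Fin m → ℕ)) (hβ : Function.Injective β)
    (c : Fin N → MvPolynomial (Fin l) ℝ)
    (X : Fin m → Ω → ℝ) (Y : Fin l → Ω → ℝ)
    (hmeasX : ∀ i, Measurable (X i)) (hmeasY : ∀ i, Measurable (Y i))
    (hindep : iIndepFun (Sum.elim X Y) μ)
    (hatomX : ∀ i, NoAtoms (μ.map (X i)))
    (hatomY : ∀ i, NoAtoms (μ.map (Y i)))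
    (hpos : 0 < μ {ω | ∑ j, MvPolynomial.eval (fun i => Y i ω) (c j) *
      ∏ i, (X i ω) ^ (β j i) = 0}) :
    ∀ j, 0 < μ {ω | MvPolynomial.eval (fun i => Y i ω) (c j) = 0} :=
  coefficients_vanish_of_polynomial_vanishes_general μ m l N β hβ c X Y hmeasX hmeasY hindep hatomX
    hpos
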